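/- Expected relative Lipschitzness of the randomized finite-sum estimator: let f_i be convex, differentiable and L_i-smooth for each i ∈ [n], μ > 0, and p_j := √(L_j)/(2∑_i √(L_i)) + 1/(2n). Fix w encoded by (x, u₁, …, uₙ); for each j ∈ [n] fix x_a ∈ 𝒳 (the same for all j), u'_j ∈ 𝒳, x_+(j) ∈ 𝒳, u''_j ∈ 𝒳, and let w_aux(j) be encoded by (x_a, with j-th dual coordinate u'_j and all others u_i), and w_+(j) encoded by (x_+(j), with j-th dual coordinate u''_j and all others u_i). Then with λ := 2n + 2∑_i √(L_i)/√(nμ): ∑_{j=1}^n p_j [ ⟨(1/(n p_j))(∇f_j(u'_j) − ∇f_j(u_j)) + μ(x_a − x), x_a − x_+(j)⟩ + ⟨(1/(n p_j))((u'_j − x_a) − (u_j − x)), ∇f_j(u'_j) − ∇f_j(u''_j)⟩ ] ≤ λ ∑_{j=1}^n p_j [ μ V_x(x_a) + (1/n)V^{f_j}_{u'_j}(u_j) + μ V_{x_a}(x_+(j)) + (1/n)V^{f_j}_{u''_j}(u'_j) ]. -/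

import Mathlib

open scoped RealInnerProductSpace

/-- Bregman divergence `V^φ_u(v) = φ(v) - φ(u) - ⟪∇φ(u), v - u⟫`, with explicit gradient `φ'`. -/
noncomputable def breg {X : Type*} [NormedAddCommGroup X] [InnerProductSpace ℝ X]
    (φ : X → ℝ) (φ' : X → X) (u v : X) : ℝ :=
  φ v - φ u - ⟪φ' u, v - u⟫

/-!
Each summand is bounded separately; the weights `p j` only enter through `1 / (n p_j) ≤ 2` and
`√L_j / (n p_j) ≤ 2 ∑ √L_i / n`. After splitting the pairing, the gradient-difference terms are
controlled by cocoercivity `‖∇f(a) - ∇f(b)‖² ≤ 2 L V^f_b(a)` followed by Young's inequality with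
parameter `√(nμ)`, the term `⟪u' - u, ∇f(u') - ∇f(u'')⟫` by the three-point identity for Bregman
divergences, and the remaining `μ`-term by `⟪a, b⟫ ≤ ‖a‖²/2 + ‖b‖²/2`.
-/

section Bregman

variable {X : Type*} [NormedAddCommGroup X] [InnerProductSpace ℝ X]

lemma breg_add_breg (φ : X → ℝ) (φ' : X → X) (a b c : X) :
    breg φ φ' c b + breg φ φ' b a = breg φ φ' c a + ⟪φ' b - φ' c, b - a⟫ := by
  simp only [breg, inner_sub_left, inner_sub_right]
  ring

lemma inner_le_of_norm_sq_le {g y : X} {A c t : ℝ} (hA : 0 ≤ A) (hc : 0 ≤ c) (ht : 0 < t)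
    (hg : ‖g‖ ^ 2 ≤ c ^ 2 * (2 * A)) :
    ⟪g, y⟫ ≤ c / t * A + c * t * (‖y‖ ^ 2 / 2) := by
  have hnorm : ‖g‖ ≤ c * √(2 * A) := by
    rwa [← pow_le_pow_iff_left₀ (norm_nonneg g) (by positivity) two_ne_zero, mul_pow,
      Real.sq_sqrt (by positivity)]
  have hamgm : √(2 * A) * ‖y‖ ≤ A / t + t * (‖y‖ ^ 2 / 2) := by
    rw [div_add' _ _ _ ht.ne', le_div_iff₀ ht]
    nlinarith [sq_nonneg (√(2 * A) - t * ‖y‖), Real.sq_sqrt (by positivity : 0 ≤ 2 * A)]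
  calc ⟪g, y⟫ ≤ ‖g‖ * ‖y‖ := real_inner_le_norm g y
    _ ≤ c * √(2 * A) * ‖y‖ := by gcongr
    _ ≤ c * (A / t + t * (‖y‖ ^ 2 / 2)) := by rw [mul_assoc]; gcongr
    _ = c / t * A + c * t * (‖y‖ ^ 2 / 2) := by ring

variable [CompleteSpace X] {f : X → ℝ} {f' : X → X}

lemma HasGradientAt.hasDerivAt_add_smul {g u d : X} {t : ℝ}
    (h : HasGradientAt f g (u + t • d)) :
    HasDerivAt (fun s : ℝ => f (u + s • d)) ⟪g, d⟫ t := by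
  have hline : HasDerivAt (fun s : ℝ => u + s • d) d t := by
    simpa using ((hasDerivAt_id t).smul_const d).const_add u
  simpa [Function.comp_def, InnerProductSpace.toDual_apply_apply] using
    (hasGradientAt_iff_hasFDerivAt.mp h).comp_hasDerivAt t hline

lemma ConvexOn.add_inner_le {g u : X} (hf : ConvexOn ℝ Set.univ f) (hg : HasGradientAt f g u)
    (v : X) : f u + ⟪g, v - u⟫ ≤ f v := by
  have hline : ConvexOn ℝ Set.univ (fun t : ℝ => f (u + t • (v - u))) := by
    have heq : (fun t : ℝ => f (u + t • (v - u))) = f ∘ AffineMap.lineMap u v := by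
      funext t
      simp [AffineMap.lineMap_apply, add_comm]
    simpa [heq] using hf.comp_affineMap (AffineMap.lineMap u v : ℝ →ᵃ[ℝ] X)
  have hderiv := hline.le_slope_of_hasDerivAt (Set.mem_univ 0) (Set.mem_univ 1) one_pos
    (HasGradientAt.hasDerivAt_add_smul (by simpa using hg))
  simp only [slope_def_field, one_smul, add_sub_cancel, zero_smul, add_zero, sub_zero,
    div_one] at hderiv
  linarith

lemma breg_nonneg (hf : ConvexOn ℝ Set.univ f) {u : X} (hu : HasGradientAt f (f' u) u) (v : X) :
    0 ≤ breg f f' u v := by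
  have := hf.add_inner_le hu v
  simp only [breg]
  linarith

lemma breg_le_of_lipschitz {L : ℝ} (hdiff : ∀ z, HasGradientAt f (f' z) z)
    (hsmooth : ∀ a b, ‖f' a - f' b‖ ≤ L * ‖a - b‖) (u v : X) :
    breg f f' u v ≤ L / 2 * ‖v - u‖ ^ 2 := by
  set d := v - u
  let φ : ℝ → ℝ := fun t => f (u + t • d) - t * ⟪f' u, d⟫ - L / 2 * t ^ 2 * ‖d‖ ^ 2
  let φ' : ℝ → ℝ := fun t => ⟪f' (u + t • d) - f' u, d⟫ - L * t * ‖d‖ ^ 2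
  have hφ : ∀ t, HasDerivAt φ (φ' t) t := by
    intro t
    refine ((((hdiff (u + t • d)).hasDerivAt_add_smul).sub
      ((hasDerivAt_id t).mul_const ⟪f' u, d⟫)).sub
      (((hasDerivAt_pow 2 t).const_mul (L / 2)).mul_const (‖d‖ ^ 2))).congr_deriv ?_
    simp only [φ', inner_sub_left]
    ring
  have hφ'_nonpos : ∀ t, 0 ≤ t → φ' t ≤ 0 := by
    intro t ht
    have h := (real_inner_le_norm _ _).trans
      (mul_le_mul_of_nonneg_right (hsmooth (u + t • d) u) (norm_nonneg d))
    simp only [add_sub_cancel_left, norm_smul, Real.norm_of_nonneg ht] at h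
    simp only [φ']
    nlinarith
  have hanti : AntitoneOn φ (Set.Ici 0) :=
    antitoneOn_of_hasDerivWithinAt_nonpos (convex_Ici 0)
      (fun t _ => (hφ t).continuousAt.continuousWithinAt)
      (fun t _ => (hφ t).hasDerivWithinAt)
      (fun t ht => hφ'_nonpos t (interior_subset ht))
  have hφ_le : φ 1 ≤ φ 0 := hanti Set.self_mem_Ici (Set.mem_Ici.mpr zero_le_one) zero_le_one
  simp only [φ, d, one_smul, add_sub_cancel, one_mul, one_pow, mul_one, zero_smul, add_zero,
    zero_mul, sub_zero, ne_eq, OfNat.ofNat_ne_zero, not_false_eq_true, zero_pow, mul_zero,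
    tsub_le_iff_right] at hφ_le
  simp only [breg]
  linarith


lemma norm_sub_sq_le_breg {L : ℝ} (hL : 0 ≤ L) (hf : ConvexOn ℝ Set.univ f)
    (hdiff : ∀ z, HasGradientAt f (f' z) z) (hsmooth : ∀ a b, ‖f' a - f' b‖ ≤ L * ‖a - b‖)
    (a b : X) : ‖f' a - f' b‖ ^ 2 ≤ 2 * L * breg f f' b a := by
  rcases hL.eq_or_lt with rfl | hL
  · have hzero : f' a - f' b = 0 := norm_le_zero_iff.mp (by simpa using hsmooth a b)
    simp [hzero]
  set g := f' a - f' b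
  set c := L⁻¹
  have hc : L * c = 1 := mul_inv_cancel₀ hL.ne'
  set w := a - c • g
  have hthree := breg_add_breg f f' w a b
  have hdesc := breg_le_of_lipschitz hdiff hsmooth a w
  have hnonneg := breg_nonneg hf (hdiff b) w
  have haw : a - w = c • g := by simp [w]
  have hwa : ‖w - a‖ = c * ‖g‖ := by
    rw [← norm_neg, neg_sub, haw, norm_smul, Real.norm_of_nonneg (inv_nonneg.mpr hL.le)]
  rw [haw, real_inner_smul_right, real_inner_self_eq_norm_sq] at hthree
  rw [hwa] at hdesc
  have key : c * ‖g‖ ^ 2 - L / 2 * (c * ‖g‖) ^ 2 ≤ breg f f' b a := by linarith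
  linear_combination (2 * L) * key + ‖g‖ ^ 2 * (L * c - 1) * hc

lemma inner_sampled_operator_le {L μ s c t : ℝ} (hL : 0 ≤ L) (hμ : 0 ≤ μ) (hs : 0 ≤ s)
    (hs2 : s ≤ 2) (hsc : s * √L ≤ c) (ht : 0 < t) (hf : ConvexOn ℝ Set.univ f)
    (hdiff : ∀ z, HasGradientAt f (f' z) z) (hsmooth : ∀ a b, ‖f' a - f' b‖ ≤ L * ‖a - b‖)
    (x xa xp u u' u'' : X) :
    ⟪s • (f' u' - f' u) + μ • (xa - x), xa - xp⟫ + ⟪s • ((u' - xa) - (u - x)), f' u' - f' u''⟫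
      ≤ (2 + c / t) * (breg f f' u' u + breg f f' u'' u')
        + (μ + c * t) * (‖x - xa‖ ^ 2 / 2 + ‖xa - xp‖ ^ 2 / 2) := by
  have hc : 0 ≤ c := (by positivity : 0 ≤ s * √L).trans hsc
  have hscaled : ∀ a b, ‖s • (f' a - f' b)‖ ^ 2 ≤ c ^ 2 * (2 * breg f f' b a) := by
    intro a b
    have hsc2 : s ^ 2 * L ≤ c ^ 2 := by
      simpa [mul_pow, Real.sq_sqrt hL] using pow_le_pow_left₀ (by positivity) hsc 2
    calc ‖s • (f' a - f' b)‖ ^ 2 = s ^ 2 * ‖f' a - f' b‖ ^ 2 := by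
          rw [norm_smul, Real.norm_of_nonneg hs, mul_pow]
      _ ≤ s ^ 2 * (2 * L * breg f f' b a) := by
          gcongr; exact norm_sub_sq_le_breg hL hf hdiff hsmooth a b
      _ = s ^ 2 * L * (2 * breg f f' b a) := by ring
      _ ≤ c ^ 2 * (2 * breg f f' b a) := by
          gcongr; exact mul_nonneg zero_le_two (breg_nonneg hf (hdiff b) a)
  have hA := breg_nonneg hf (hdiff u') u
  have hB := breg_nonneg hf (hdiff u'') u'
  have h1 : ⟪s • (f' u' - f' u), xa - xp⟫ ≤ c / t * breg f f' u' u
      + c * t * (‖xa - xp‖ ^ 2 / 2) := by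
    refine inner_le_of_norm_sq_le hA hc ht ?_
    simpa [norm_smul, norm_sub_rev] using hscaled u u'
  have h2 : ⟪s • (f' u' - f' u''), x - xa⟫ ≤ c / t * breg f f' u'' u'
      + c * t * (‖x - xa‖ ^ 2 / 2) :=
    inner_le_of_norm_sq_le hB hc ht (hscaled u' u'')
  have h3 : s * ⟪u' - u, f' u' - f' u''⟫ ≤ 2 * (breg f f' u' u + breg f f' u'' u') := by
    have hthree := breg_add_breg f f' u u' u''
    have hC := breg_nonneg hf (hdiff u'') u
    rw [real_inner_comm]
    nlinarith
  have h4 : μ * ⟪xa - x, xa - xp⟫ ≤ μ * (‖x - xa‖ ^ 2 / 2 + ‖xa - xp‖ ^ 2 / 2) := by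
    have := norm_sub_sq_real (xa - x) (xa - xp)
    rw [norm_sub_rev xa x] at this
    gcongr
    linarith [sq_nonneg ‖xa - x - (xa - xp)‖]
  have hsplit : ⟪s • (f' u' - f' u) + μ • (xa - x), xa - xp⟫
      + ⟪s • ((u' - xa) - (u - x)), f' u' - f' u''⟫
      = ⟪s • (f' u' - f' u), xa - xp⟫ + μ * ⟪xa - x, xa - xp⟫
        + s * ⟪u' - u, f' u' - f' u''⟫ + ⟪s • (f' u' - f' u''), x - xa⟫ := by
    have : (u' - xa) - (u - x) = (u' - u) + (x - xa) := by abel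
    rw [this]
    simp only [inner_add_left, real_inner_smul_left]
    rw [real_inner_comm (x - xa)]
    ring
  rw [hsplit]
  linarith

lemma inner_sampled_operator_le_lam {L μ s n S : ℝ} (hL : 0 ≤ L) (hμ : 0 < μ) (hn : 1 ≤ n)
    (hs : 0 ≤ s) (hs2 : s ≤ 2) (hsS : s * √L ≤ 2 * S / n) (hf : ConvexOn ℝ Set.univ f)
    (hdiff : ∀ z, HasGradientAt f (f' z) z) (hsmooth : ∀ a b, ‖f' a - f' b‖ ≤ L * ‖a - b‖)
    (x xa xp u u' u'' : X) :
    ⟪s • (f' u' - f' u) + μ • (xa - x), xa - xp⟫ + ⟪s • ((u' - xa) - (u - x)), f' u' - f' u''⟫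
      ≤ (2 * n + 2 * S / √(n * μ)) * (μ * (1 / 2 * ‖x - xa‖ ^ 2) + 1 / n * breg f f' u' u
        + μ * (1 / 2 * ‖xa - xp‖ ^ 2) + 1 / n * breg f f' u'' u') := by
  set t := √(n * μ)
  have ht : 0 < t := Real.sqrt_pos.mpr (by positivity)
  have ht2 : t ^ 2 = n * μ := Real.sq_sqrt (by positivity)
  refine (inner_sampled_operator_le hL hμ.le hs hs2 hsS ht hf hdiff hsmooth x xa xp u u' u'').trans
    (le_of_sub_nonneg ?_)
  have hct : 2 * S / n * t = 2 * S / t * μ := by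
    field_simp
    linear_combination S * ht2
  have hgap : (2 * n + 2 * S / t) * (μ * (1 / 2 * ‖x - xa‖ ^ 2) + 1 / n * breg f f' u' u
        + μ * (1 / 2 * ‖xa - xp‖ ^ 2) + 1 / n * breg f f' u'' u')
      - ((2 + 2 * S / n / t) * (breg f f' u' u + breg f f' u'' u')
        + (μ + 2 * S / n * t) * (‖x - xa‖ ^ 2 / 2 + ‖xa - xp‖ ^ 2 / 2))
      = (2 * n - 1) * μ * (‖x - xa‖ ^ 2 / 2 + ‖xa - xp‖ ^ 2 / 2) := by
    rw [hct]
    field_simp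
    ring
  rw [hgap]
  have : 0 ≤ 2 * n - 1 := by linarith
  positivity

end Bregman

lemma sampling_weight_bounds {n a S p : ℝ} (hn : 0 < n) (ha : 0 ≤ a) (haS : a ≤ S)
    (hp : p = a / (2 * S) + 1 / (2 * n)) :
    0 < p ∧ 1 / (n * p) ≤ 2 ∧ 1 / (n * p) * a ≤ 2 * S / n := by
  have hS : 0 ≤ S := ha.trans haS
  have hp0 : 0 < p := by rw [hp]; positivity
  have hSa : 2 * S * (a / (2 * S)) = a := by
    by_cases hS0 : S = 0
    · simp [hS0, le_antisymm (hS0 ▸ haS) ha]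
    · field_simp
  have hnp : 2 * S * (n * p) = n * a + S := by
    calc 2 * S * (n * p) = n * (2 * S * (a / (2 * S))) + S * (n / n) := by rw [hp]; ring
      _ = n * a + S := by rw [hSa, div_self hn.ne', mul_one]
  refine ⟨hp0, ?_, ?_⟩
  · have hnp_half : n * p = n * (a / (2 * S)) + 1 / 2 := by
      rw [hp, mul_add]
      field_simp
    rw [div_le_iff₀ (by positivity), hnp_half]
    have : 0 ≤ n * (a / (2 * S)) := by positivity
    linarith
  · rw [div_mul_eq_mul_div, one_mul, div_le_div_iff₀ (by positivity) hn, hnp]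
    linarith

theorem stmt_13_general {X : Type*} [NormedAddCommGroup X] [InnerProductSpace ℝ X]
    [FiniteDimensional ℝ X]
    (n : ℕ) (μ : ℝ) (hμ : 0 < μ)
    (f : Fin n → X → ℝ) (f' : Fin n → X → X) (L : Fin n → ℝ) (hL : ∀ i, 0 ≤ L i)
    (hconv : ∀ i, ConvexOn ℝ Set.univ (f i))
    (hdiff : ∀ i x, HasGradientAt (f i) (f' i x) x)
    (hsmooth : ∀ i a b, ‖f' i a - f' i b‖ ≤ L i * ‖a - b‖)
    (p : Fin n → ℝ)
    (hp : ∀ j, p j = Real.sqrt (L j) / (2 * ∑ i, Real.sqrt (L i)) + 1 / (2 * (n : ℝ)))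
    (lam : ℝ)
    (hlam : lam = 2 * (n : ℝ) + 2 * (∑ i, Real.sqrt (L i)) / Real.sqrt ((n : ℝ) * μ))
    -- `w` encoded by `(x, u₁, …, uₙ)`; `w_aux(j)` has 𝒳-coordinate `xa` (common to all `j`)
    -- and `j`-th dual representative `u' j`; `w₊(j)` has 𝒳-coordinate `xplus j` and `j`-th
    -- dual representative `u'' j`.
    (x xa : X) (u u' u'' xplus : Fin n → X) :
    ∑ j, p j *
        (⟪(1 / ((n : ℝ) * p j)) • (f' j (u' j) - f' j (u j)) + μ • (xa - x), xa - xplus j⟫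
          + ⟪(1 / ((n : ℝ) * p j)) • ((u' j - xa) - (u j - x)), f' j (u' j) - f' j (u'' j)⟫)
      ≤ lam * ∑ j, p j *
          (μ * (1 / 2 * ‖x - xa‖ ^ 2) + (1 / (n : ℝ)) * breg (f j) (f' j) (u' j) (u j)
            + μ * (1 / 2 * ‖xa - xplus j‖ ^ 2)
            + (1 / (n : ℝ)) * breg (f j) (f' j) (u'' j) (u' j)) := by
  rw [Finset.mul_sum]
  refine Finset.sum_le_sum fun j _ => ?_
  have hn : (1 : ℝ) ≤ n := by exact_mod_cast j.pos
  have hLS : √(L j) ≤ ∑ i, √(L i) :=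
    Finset.single_le_sum (fun i _ => Real.sqrt_nonneg (L i)) (Finset.mem_univ j)
  obtain ⟨hp0, hs2, hsS⟩ :=
    sampling_weight_bounds (by linarith) (Real.sqrt_nonneg (L j)) hLS (hp j)
  rw [hlam, mul_left_comm]
  exact mul_le_mul_of_nonneg_left
    (inner_sampled_operator_le_lam (hL j) hμ hn (by positivity) hs2 hsS (hconv j) (hdiff j)
      (hsmooth j) x xa (xplus j) (u j) (u' j) (u'' j)) hp0.le

/-- Expected relative Lipschitzness of the randomized finite-sum gradient estimator, with
sampling probabilities `p_j = √L_j/(2∑√L_i) + 1/(2n)` and `λ = 2n + 2∑√L_i/√(nμ)`. -/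
theorem stmt_13 {X : Type*} [NormedAddCommGroup X] [InnerProductSpace ℝ X]
    [FiniteDimensional ℝ X]
    (n : ℕ) (hn : 1 ≤ n) (μ : ℝ) (hμ : 0 < μ)
    (f : Fin n → X → ℝ) (f' : Fin n → X → X) (L : Fin n → ℝ) (hL : ∀ i, 0 ≤ L i)
    (hconv : ∀ i, ConvexOn ℝ Set.univ (f i))
    (hdiff : ∀ i x, HasGradientAt (f i) (f' i x) x)
    (hsmooth : ∀ i a b, ‖f' i a - f' i b‖ ≤ L i * ‖a - b‖)
    (p : Fin n → ℝ)
    (hp : ∀ j, p j = Real.sqrt (L j) / (2 * ∑ i, Real.sqrt (L i)) + 1 / (2 * (n : ℝ)))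
    (lam : ℝ)
    (hlam : lam = 2 * (n : ℝ) + 2 * (∑ i, Real.sqrt (L i)) / Real.sqrt ((n : ℝ) * μ))
    -- `w` encoded by `(x, u₁, …, uₙ)`; `w_aux(j)` has 𝒳-coordinate `xa` (common to all `j`)
    -- and `j`-th dual representative `u' j`; `w₊(j)` has 𝒳-coordinate `xplus j` and `j`-th
    -- dual representative `u'' j`.
    (x xa : X) (u u' u'' xplus : Fin n → X) :
    ∑ j, p j *
        (⟪(1 / ((n : ℝ) * p j)) • (f' j (u' j) - f' j (u j)) + μ • (xa - x), xa - xplus j⟫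
          + ⟪(1 / ((n : ℝ) * p j)) • ((u' j - xa) - (u j - x)), f' j (u' j) - f' j (u'' j)⟫)
      ≤ lam * ∑ j, p j *
          (μ * (1 / 2 * ‖x - xa‖ ^ 2) + (1 / (n : ℝ)) * breg (f j) (f' j) (u' j) (u j)
            + μ * (1 / 2 * ‖xa - xplus j‖ ^ 2)
            + (1 / (n : ℝ)) * breg (f j) (f' j) (u'' j) (u' j)) :=
  stmt_13_general n μ hμ f f' L hL hconv hdiff hsmooth p hp lam hlam x xa u u' u'' xplus
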